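/- Assume d1 < x_T < d2. For every x ∈ (d1,d2), every s ∈ [0,T), and every d ∈ {d1,d2}: u(x,s;d,t) → +∞ as t → s from the right, u(x,s;d,t) → +∞ as t → T from the left, and the function t ↦ u(x,s;d,t) attains its minimum at some point of the open interval (s,T). -/

import Mathlib

open Filter Set Real

/-- The deterministic trajectory `x⁰_{x,s}`. -/
noncomputable def traj (a0 a1 T xT x s t : ℝ) : ℝ :=
  (x + a0 / a1) * Real.sinh (a1 * (T - t)) / Real.sinh (a1 * (T - s)) +
    (xT + a0 / a1) * Real.sinh (a1 * (t - s)) / Real.sinh (a1 * (T - s)) - a0 / a1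

/-- The two-point cost `u(x,s;d,t)`. -/
noncomputable def cost (a0 a1 T xT x s d t : ℝ) : ℝ :=
  a1 * Real.sinh (a1 * (T - s)) * (d - traj a0 a1 T xT x s t) ^ 2 /
    (2 * Real.sinh (a1 * (T - t)) * Real.sinh (a1 * (t - s)))

lemma key_pos (a1 : ℝ) (ha1 : a1 ≠ 0) {r : ℝ} (hr : 0 < r) :
    0 < a1 * Real.sinh (a1 * r) := by
  rcases lt_or_gt_of_ne ha1 with h | h
  · have : a1 * r < 0 := mul_neg_of_neg_of_pos h hr
    have : Real.sinh (a1 * r) < 0 := by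
      rwa [← Real.sinh_zero, Real.sinh_lt_sinh]
    exact mul_pos_of_neg_of_neg h this
  · have : 0 < a1 * r := mul_pos h hr
    have : 0 < Real.sinh (a1 * r) := by
      rwa [← Real.sinh_zero, Real.sinh_lt_sinh]
    exact mul_pos h this

theorem stmt_8 (a0 a1 T xT d1 d2 : ℝ) (ha1 : a1 ≠ 0) (hT : 0 < T)
    (h1 : d1 < xT) (h2 : xT < d2) :
    ∀ x ∈ Set.Ioo d1 d2, ∀ s, 0 ≤ s → s < T → ∀ d, (d = d1 ∨ d = d2) →
      Filter.Tendsto (fun t => cost a0 a1 T xT x s d t)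
        (nhdsWithin s (Set.Ioi s)) Filter.atTop ∧
      Filter.Tendsto (fun t => cost a0 a1 T xT x s d t)
        (nhdsWithin T (Set.Iio T)) Filter.atTop ∧
      ∃ t0 ∈ Set.Ioo s T, ∀ t ∈ Set.Ioo s T,
        cost a0 a1 T xT x s d t0 ≤ cost a0 a1 T xT x s d t := by
  intro x hx s hs0 hsT d hd
  have ha2 : (0:ℝ) < a1 ^ 2 := by positivity
  have hC : 0 < a1 * Real.sinh (a1 * (T - s)) := key_pos a1 ha1 (sub_pos.2 hsT)
  have hS : Real.sinh (a1 * (T - s)) ≠ 0 := by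
    intro h; rw [h, mul_zero] at hC; exact lt_irrefl 0 hC
  have hdx : d ≠ x := by
    rcases hd with rfl | rfl
    · exact ne_of_lt hx.1
    · exact ne_of_gt hx.2
  have hdxT : d ≠ xT := by
    rcases hd with rfl | rfl
    · exact ne_of_lt h1
    · exact ne_of_gt h2
  set g : ℝ → ℝ := fun t =>
    a1 * Real.sinh (a1 * (T - s)) * (d - traj a0 a1 T xT x s t) ^ 2 with hgdef
  set h : ℝ → ℝ := fun t =>
    2 * Real.sinh (a1 * (T - t)) * Real.sinh (a1 * (t - s)) with hhdef
  have hcost : ∀ t, cost a0 a1 T xT x s d t = g t / h t := fun t => rfl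
  have htraj : Continuous (traj a0 a1 T xT x s) := by
    unfold traj; fun_prop
  have hg : Continuous g := by fun_prop
  have hh : Continuous h := by fun_prop
  have hhpos : ∀ t ∈ Set.Ioo s T, 0 < h t := by
    intro t ht
    have p1 := key_pos a1 ha1 (sub_pos.2 ht.2)
    have p2 := key_pos a1 ha1 (sub_pos.2 ht.1)
    have := mul_pos p1 p2
    simp only [hhdef]
    nlinarith
  have htrajs : traj a0 a1 T xT x s s = x := by
    unfold traj
    rw [sub_self, mul_zero, Real.sinh_zero]
    field_simp
    ring
  have htrajT : traj a0 a1 T xT x s T = xT := by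
    unfold traj
    rw [sub_self, mul_zero, Real.sinh_zero]
    field_simp
    ring
  have hhs : h s = 0 := by simp [hhdef]
  have hhT : h T = 0 := by simp [hhdef]
  have hgs : 0 < g s := by
    simp only [hgdef, htrajs]
    have : d - x ≠ 0 := sub_ne_zero.2 hdx
    positivity
  have hgT : 0 < g T := by
    simp only [hgdef, htrajT]
    have : d - xT ≠ 0 := sub_ne_zero.2 hdxT
    positivity
  have hfc : ContinuousOn (fun t => cost a0 a1 T xT x s d t) (Set.Ioo s T) := by
    simp only [hcost]
    exact hg.continuousOn.div hh.continuousOn (fun t ht => (hhpos t ht).ne')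
  -- tendsto at s from the right
  have key : ∀ (p : ℝ), p ∈ Set.Ioo s T ∨ p = s ∨ p = T → h p = 0 →
      Set.Ioo s T ∈ nhdsWithin p (Set.Ioi s) → True := fun _ _ _ _ => trivial
  have tends : ∀ (p : ℝ) (l : Filter ℝ), l ≤ nhds p → Set.Ioo s T ∈ l → h p = 0 → 0 < g p →
      Filter.Tendsto (fun t => cost a0 a1 T xT x s d t) l Filter.atTop := by
    intro p l hl hmem hp hgp
    have hgl : Filter.Tendsto g l (nhds (g p)) := (hg.tendsto p).mono_left hl
    have hhl : Filter.Tendsto h l (nhdsWithin 0 (Set.Ioi 0)) := by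
      rw [tendsto_nhdsWithin_iff]
      constructor
      · have := (hh.tendsto p).mono_left hl
        rwa [hp] at this
      · filter_upwards [hmem] with t ht using hhpos t ht
    have : Filter.Tendsto (fun t => g t * (h t)⁻¹) l Filter.atTop :=
      hgl.pos_mul_atTop hgp hhl.inv_tendsto_nhdsGT_zero
    refine this.congr fun t => ?_
    rw [hcost, div_eq_mul_inv]
  have hIoos : Set.Ioo s T ∈ nhdsWithin s (Set.Ioi s) :=
    Ioo_mem_nhdsGT_of_mem ⟨le_refl s, hsT⟩
  have hIooT : Set.Ioo s T ∈ nhdsWithin T (Set.Iio T) :=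
    Ioo_mem_nhdsLT_of_mem ⟨hsT, le_refl T⟩
  have ht_s := tends s _ nhdsWithin_le_nhds hIoos hhs hgs
  have ht_T := tends T _ nhdsWithin_le_nhds hIooT hhT hgT
  refine ⟨ht_s, ht_T, ?_⟩
  -- minimum
  set f : ℝ → ℝ := fun t => cost a0 a1 T xT x s d t with hfdef
  set t1 : ℝ := (s + T) / 2 with ht1def
  have ht1 : t1 ∈ Set.Ioo s T := ⟨by linarith, by linarith⟩
  set M : ℝ := f t1 with hMdef
  have evs : ∀ᶠ t in nhdsWithin s (Set.Ioi s), M < f t := ht_s.eventually_gt_atTop M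
  have evT : ∀ᶠ t in nhdsWithin T (Set.Iio T), M < f t := ht_T.eventually_gt_atTop M
  obtain ⟨a, ha, hsub_a⟩ := mem_nhdsGT_iff_exists_Ioo_subset.1 evs
  obtain ⟨b, hb, hsub_b⟩ := mem_nhdsLT_iff_exists_Ioo_subset.1 evT
  set a' : ℝ := min a t1 with ha'def
  set b' : ℝ := max b t1 with hb'def
  have ha's : s < a' := lt_min ha ht1.1
  have hb'T : b' < T := max_lt hb ht1.2
  have ha't1 : a' ≤ t1 := min_le_right _ _
  have ht1b' : t1 ≤ b' := le_max_right _ _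
  have hsub : Set.Icc a' b' ⊆ Set.Ioo s T := fun t ht =>
    ⟨lt_of_lt_of_le ha's ht.1, lt_of_le_of_lt ht.2 hb'T⟩
  obtain ⟨t0, ht0, hmin⟩ := (isCompact_Icc).exists_isMinOn ⟨t1, ha't1, ht1b'⟩
    (hfc.mono hsub)
  refine ⟨t0, hsub ht0, ?_⟩
  intro t ht
  have hft0M : f t0 ≤ M := hmin ⟨ha't1, ht1b'⟩
  by_cases hta : a' ≤ t
  · by_cases htb : t ≤ b'
    · exact hmin ⟨hta, htb⟩
    · push_neg at htb
      have : t ∈ Set.Ioo b T := ⟨lt_of_le_of_lt (le_max_left b t1) htb, ht.2⟩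
      exact le_of_lt (lt_of_le_of_lt hft0M (hsub_b this))
  · push_neg at hta
    have : t ∈ Set.Ioo s a := ⟨ht.1, lt_of_lt_of_le hta (min_le_left a t1)⟩
    exact le_of_lt (lt_of_le_of_lt hft0M (hsub_a this))
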